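/- A mixed graph G=(V,D,B) is HTC-infinite-to-one if and only if the maximum number of directed paths from s to t in the flow network G_flow that are pairwise vertex-disjoint except at the common endpoints s and t is strictly less than |D| = Σ_{v∈V}|pa(v)|. -/

import Mathlib

open scoped Classical Matrix

/-- A mixed graph `G = (V, D, B)`: a finite vertex set `V`, a set `D` of directed
edges, and a symmetric set `B` of bidirected edges; no self-loops. -/
structure MixedGraph (V : Type*) [Fintype V] [DecidableEq V] where
  D : Finset (V × V)
  B : Finset (V × V)
  B_symm : ∀ v w : V, (v, w) ∈ B → (w, v) ∈ B
  D_irrefl : ∀ v : V, (v, v) ∉ D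
  B_irrefl : ∀ v : V, (v, v) ∉ B

namespace MixedGraph

variable {V : Type*} [Fintype V] [DecidableEq V]

/-- The parents of `v`: nodes `w` with `w → v ∈ D`. -/
def pa (G : MixedGraph V) (v : V) : Finset V :=
  Finset.univ.filter fun w => (w, v) ∈ G.D

/-- The siblings of `v`: nodes `w` with `w ↔ v ∈ B`. -/
def sib (G : MixedGraph V) (v : V) : Finset V :=
  Finset.univ.filter fun w => (w, v) ∈ G.B

/-- A trek: a walk with no colliding arrowheads.  The field `left` lists the nodes of the
left-hand side from top (head) to source (last); `right` lists the nodes of the right-hand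
side from top (head) to target (last); consecutive nodes in each list are joined by directed
edges pointing away from the head.  If `hasBidir` then the two heads are joined by a
bidirected edge, otherwise they coincide (the top node). -/
structure Trek (G : MixedGraph V) where
  left : List V
  right : List V
  left_ne : left ≠ []
  right_ne : right ≠ []
  hasBidir : Bool
  left_chain : left.Chain' fun a b => (a, b) ∈ G.D
  right_chain : right.Chain' fun a b => (a, b) ∈ G.D
  head_cond : if hasBidir then (left.head left_ne, right.head right_ne) ∈ G.B
              else left.head left_ne = right.head right_ne

namespace Trek

variable {G : MixedGraph V}

/-- The source of a trek. -/
def source (π : G.Trek) : V := π.left.getLast π.left_ne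

/-- The target of a trek. -/
def target (π : G.Trek) : V := π.right.getLast π.right_ne

/-- The left-hand side `Left(π)` of a trek, as a set of nodes. -/
def leftSet (π : G.Trek) : Finset V := π.left.toFinset

/-- The right-hand side `Right(π)` of a trek, as a set of nodes. -/
def rightSet (π : G.Trek) : Finset V := π.right.toFinset

/-- A half-trek is a trek whose left-hand side consists of exactly one node. -/
def IsHalfTrek (π : G.Trek) : Prop := π.leftSet.card = 1

/-- The number of directed edges traversed by the trek. -/
def nEdges (π : G.Trek) : ℕ := (π.left.length - 1) + (π.right.length - 1)

end Trek

/-- `htr v`: the set of nodes `w ∉ {v} ∪ sib(v)` reachable from `v` by a half-trek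
containing at least one directed edge. -/
def htr (G : MixedGraph V) (v : V) : Set V :=
  {w | w ≠ v ∧ w ∉ G.sib v ∧
    ∃ π : G.Trek, π.source = v ∧ π.target = w ∧ π.IsHalfTrek ∧ 1 ≤ π.nEdges}

/-- `f` encodes a system of treks from `Y` to `P`: treks with pairwise distinct sources
forming `Y` and pairwise distinct targets forming `P`. -/
def IsTrekSystem (G : MixedGraph V) (Y P : Finset V) (f : V → G.Trek) : Prop :=
  (∀ y ∈ Y, (f y).source = y) ∧
  (Y.image fun y => (f y).target) = P ∧
  ∀ y ∈ Y, ∀ y' ∈ Y, y ≠ y' → (f y).target ≠ (f y').target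

/-- The treks `f y`, `y ∈ Y`, have no sided intersection. -/
def NoSidedIntersection (G : MixedGraph V) (Y : Finset V) (f : V → G.Trek) : Prop :=
  ∀ y ∈ Y, ∀ y' ∈ Y, y ≠ y' →
    Disjoint (f y).leftSet (f y').leftSet ∧ Disjoint (f y).rightSet (f y').rightSet

/-- `Y` satisfies the half-trek criterion with respect to `v`. -/
def SatisfiesHTC (G : MixedGraph V) (v : V) (Y : Finset V) : Prop :=
  Y.card = (G.pa v).card ∧
  (∀ y ∈ Y, y ≠ v ∧ y ∉ G.sib v) ∧
  ∃ f : V → G.Trek, (∀ y ∈ Y, (f y).IsHalfTrek) ∧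
    G.IsTrekSystem Y (G.pa v) f ∧ G.NoSidedIntersection Y f

/-- `Y` satisfies the weak half-trek criterion with respect to `v`. -/
def SatisfiesWeakHTC (G : MixedGraph V) (v : V) (Y : Finset V) : Prop :=
  Y.card = (G.pa v).card ∧
  (∀ y ∈ Y, y ≠ v ∧ y ∉ G.sib v) ∧
  ∃ f : V → G.Trek, (∀ y ∈ Y, y ∈ G.htr v → (f y).IsHalfTrek) ∧
    G.IsTrekSystem Y (G.pa v) f ∧ G.NoSidedIntersection Y f

/-- `G` is HTC-identifiable. -/
def HTCIdentifiable (G : MixedGraph V) : Prop :=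
  ∃ Y : V → Finset V,
    (∀ v, G.SatisfiesHTC v (Y v)) ∧
    ∃ r : V → V → Prop, IsStrictTotalOrder V r ∧
      ∀ v w, w ∈ Y v → w ∈ G.htr v → r w v

/-- `G` is HTC-infinite-to-one. -/
def HTCInfiniteToOne (G : MixedGraph V) : Prop :=
  ∀ Y : V → Finset V,
    (∃ v, ¬ G.SatisfiesHTC v (Y v)) ∨ ∃ v w, v ∈ Y w ∧ w ∈ Y v

/-- `G` is acyclic: no directed cycle can be formed from the edges in `D`. -/
def Acyclic (G : MixedGraph V) : Prop :=
  ∀ v : V, ¬ Relation.TransGen (fun a b => (a, b) ∈ G.D) v v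

/-- `G` is simple: at most one edge between any pair of nodes. -/
def Simple (G : MixedGraph V) : Prop :=
  (∀ e ∈ G.D, e ∉ G.B) ∧ ∀ v w : V, (v, w) ∈ G.D → (w, v) ∉ G.D

/-- `ℝ^D_reg`: real matrices supported on `D` with `I - Λ` invertible. -/
def RDreg (G : MixedGraph V) : Set (Matrix V V ℝ) :=
  {Λ | (∀ v w, (v, w) ∉ G.D → Λ v w = 0) ∧ IsUnit (1 - Λ).det}

/-- `PD(B)`: positive definite symmetric matrices supported on the diagonal and `B`. -/
def PDB (G : MixedGraph V) : Set (Matrix V V ℝ) :=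
  {Ω | Ω.PosDef ∧ ∀ v w, v ≠ w → (v, w) ∉ G.B → Ω v w = 0}

/-- The parameter space `Θ = ℝ^D_reg × PD(B)`. -/
def Theta (G : MixedGraph V) : Set (Matrix V V ℝ × Matrix V V ℝ) :=
  {θ | θ.1 ∈ G.RDreg ∧ θ.2 ∈ G.PDB}

/-- The parametrization `φ(Λ, Ω) = (I-Λ)^{-T} Ω (I-Λ)^{-1}`. -/
noncomputable def phi {R : Type*} [CommRing R] (Λ Ω : Matrix V V R) : Matrix V V R :=
  ((1 - Λ)⁻¹)ᵀ * Ω * (1 - Λ)⁻¹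

/-- Evaluation of a polynomial in the coordinates `λ_vw` (left summand) and `ω_vw`
(right summand) at a parameter point `θ = (Λ, Ω)`. -/
noncomputable def evalParam (θ : Matrix V V ℝ × Matrix V V ℝ)
    (p : MvPolynomial ((V × V) ⊕ (V × V)) ℝ) : ℝ :=
  MvPolynomial.eval (Sum.elim (fun e => θ.1 e.1 e.2) (fun e => θ.2 e.1 e.2)) p

/-- `V₀` is a proper algebraic subset of `Θ`: the intersection with `Θ` of the zero set of a
polynomial in the coordinates that does not vanish identically on `Θ`. -/
def IsProperAlgebraic (G : MixedGraph V)
    (V₀ : Set (Matrix V V ℝ × Matrix V V ℝ)) : Prop :=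
  ∃ p : MvPolynomial ((V × V) ⊕ (V × V)) ℝ,
    (∃ θ ∈ G.Theta, evalParam θ p ≠ 0) ∧
    V₀ = {θ ∈ G.Theta | evalParam θ p = 0}

/-- Evaluation of a polynomial in the entries of a covariance matrix. -/
noncomputable def evalAtCov (S : Matrix V V ℝ) (p : MvPolynomial (V × V) ℝ) : ℝ :=
  MvPolynomial.eval (fun e => S e.1 e.2) p

/-- `G` is rationally identifiable: some rational map `ψ` (each coordinate a quotient of
polynomials in the entries of the covariance matrix) satisfies `ψ ∘ φ_G = id` off a proper
algebraic subset of `Θ`. -/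
def RationallyIdentifiable (G : MixedGraph V) : Prop :=
  ∃ V₀, G.IsProperAlgebraic V₀ ∧
    ∃ p q : ((V × V) ⊕ (V × V)) → MvPolynomial (V × V) ℝ,
      ∀ θ ∈ G.Theta \ V₀,
        (∀ i, evalAtCov (phi θ.1 θ.2) (q i) ≠ 0) ∧
        (∀ v w : V, θ.1 v w * evalAtCov (phi θ.1 θ.2) (q (Sum.inl (v, w)))
            = evalAtCov (phi θ.1 θ.2) (p (Sum.inl (v, w)))) ∧
        (∀ v w : V, θ.2 v w * evalAtCov (phi θ.1 θ.2) (q (Sum.inr (v, w)))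
            = evalAtCov (phi θ.1 θ.2) (p (Sum.inr (v, w))))

/-- `G` is generically identifiable: `φ_G` is injective off a proper algebraic subset. -/
def GenericallyIdentifiable (G : MixedGraph V) : Prop :=
  ∃ V₀, G.IsProperAlgebraic V₀ ∧
    Set.InjOn (fun θ : Matrix V V ℝ × Matrix V V ℝ => phi θ.1 θ.2) (G.Theta \ V₀)

/-- `φ_G` is generically infinite-to-one. -/
def GenInfiniteToOne (G : MixedGraph V) : Prop :=
  ∃ V₀, G.IsProperAlgebraic V₀ ∧
    ∀ θ ∈ G.Theta \ V₀,
      {θ' ∈ G.Theta | phi θ'.1 θ'.2 = phi θ.1 θ.2}.Infinite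

end MixedGraph

/-- There exist `k` directed paths from `s` to `t` in the network with edge relation `E`
that are pairwise vertex-disjoint except at the common endpoints `s` and `t` (each path
being simple). -/
def HasDisjointPaths {N : Type*} (E : N → N → Prop) (s t : N) (k : ℕ) : Prop :=
  ∃ P : Fin k → List N,
    (∀ i, (P i).Chain' E ∧ (P i).head? = some s ∧ (P i).getLast? = some t ∧
      2 ≤ (P i).length ∧ (P i).Nodup) ∧
    ∀ i j, i ≠ j → ∀ x ∈ ((P i).drop 1).dropLast, x ∉ ((P j).drop 1).dropLast

/-- Nodes of the flow network `G_flow`: a source, a sink, a left-hand copy `L {v, w}` for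
each unordered pair, and a right-hand copy `R v w` (i.e. `R_v(w)`) for ordered pairs. -/
inductive FlowNode2 (V : Type*) where
  | s : FlowNode2 V
  | t : FlowNode2 V
  | L : Sym2 V → FlowNode2 V
  | R : V → V → FlowNode2 V

/-- The unordered pair `e = {v, w}` indexes a left-hand node of `G_flow`: it must satisfy
`v ≠ w` and `v ↔ w ∉ B`. -/
def validPair {V : Type*} [Fintype V] [DecidableEq V] (G : MixedGraph V)
    (e : Sym2 V) : Prop :=
  ¬ e.IsDiag ∧ ∀ v w : V, e = Sym2.mk v w → (v, w) ∉ G.B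

/-- Edges of the flow network `G_flow`. -/
def flowEdge2 {V : Type*} [Fintype V] [DecidableEq V] (G : MixedGraph V) :
    FlowNode2 V → FlowNode2 V → Prop
  | FlowNode2.s, FlowNode2.L e => validPair G e
  | FlowNode2.L e, FlowNode2.R v u =>
      validPair G e ∧ ∃ w, e = Sym2.mk v w ∧ (u = w ∨ (w, u) ∈ G.B)
  | FlowNode2.R v w, FlowNode2.R v' u => v = v' ∧ (w, u) ∈ G.D
  | FlowNode2.R v w, FlowNode2.t => (w, v) ∈ G.D
  | _, _ => False

/-!
An `s`–`t` path of `G_flow` is `s, L{v,w}, R_v(u₀), …, R_v(uᵣ), t`: the same data as a half-trek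
from some `w ∉ {v} ∪ sib(v)` along `u₀ → ⋯ → uᵣ` to a parent `uᵣ` of `v`. Two such paths meet
exactly when their pairs `{v, w}` agree or when they serve the same `v` and their right sides
meet. Disjoint paths therefore end in distinct edges `uᵣ → v`, there are never more than `|D|`
of them, and `|D|` of them amount to sets `Y_v` that satisfy the half-trek criterion
(one half-trek into each parent of `v`, no sided intersection), where distinct pairs `{v, w}`
rule out `v ∈ Y_w ∧ w ∈ Y_v`. Right sides that repeat a vertex are first shortened to simple
paths, which keeps their endpoints and can only shrink them.
-/

namespace List.IsChain

theorem exists_nodup_subset {α : Type*} {R : α → α → Prop} :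
    ∀ {l : List α}, l.IsChain R → ∃ l' : List α, l'.IsChain R ∧ l'.Nodup ∧
      l'.head? = l.head? ∧ l'.getLast? = l.getLast? ∧ l' ⊆ l
  | [], _ => ⟨[], by simp⟩
  | [x], _ => ⟨[x], by simp⟩
  | x :: y :: l, h => by
    obtain ⟨l', hc, hnd, hhead, hlast, hsub⟩ := exists_nodup_subset (List.isChain_cons_cons.1 h).2
    by_cases hx : x ∈ l'
    · -- cut the walk short at the later visit of `x`
      obtain ⟨a, b, rfl⟩ := List.append_of_mem hx
      refine ⟨x :: b, hc.suffix (List.suffix_append _ _),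
        hnd.sublist (List.sublist_append_right _ _), rfl, ?_, fun z hz => ?_⟩
      · rw [List.getLast?_cons_cons, ← hlast,
          List.getLast?_append_of_ne_nil _ (List.cons_ne_nil _ _)]
      · exact List.mem_cons_of_mem _ (hsub (List.mem_append_right _ hz))
    · refine ⟨x :: l', List.isChain_cons.2 ⟨?_, hc⟩, List.nodup_cons.2 ⟨hx, hnd⟩, rfl, ?_,
        List.cons_subset_cons _ hsub⟩
      · simpa [hhead] using (List.isChain_cons_cons.1 h).1
      · obtain _ | ⟨z, zs⟩ := l'
        · simp at hhead
        · rw [List.getLast?_cons_cons, List.getLast?_cons_cons, hlast]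

end List.IsChain

namespace MixedGraph

variable {V : Type*} [Fintype V] [DecidableEq V] {G : MixedGraph V}

lemma mem_pa {v w : V} : w ∈ G.pa v ↔ (w, v) ∈ G.D := by simp [pa]

lemma mem_sib {v w : V} : w ∈ G.sib v ↔ (w, v) ∈ G.B := by simp [sib]

lemma validPair_mk_iff {v w : V} : validPair G s(v, w) ↔ w ≠ v ∧ w ∉ G.sib v := by
  simp only [validPair, Sym2.mk_isDiag_iff, Sym2.eq_iff, mem_sib]
  constructor
  · rintro ⟨hne, hB⟩
    exact ⟨Ne.symm hne, fun h => hB v w (Or.inl ⟨rfl, rfl⟩) (G.B_symm _ _ h)⟩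
  · rintro ⟨hne, hB⟩
    refine ⟨Ne.symm hne, ?_⟩
    rintro a b (⟨rfl, rfl⟩ | ⟨rfl, rfl⟩) h
    exacts [hB (G.B_symm _ _ h), hB h]

namespace Trek

lemma left_eq_singleton {π : G.Trek} (h : π.IsHalfTrek) : π.left = [π.source] := by
  suffices ∀ l : List V, l.IsChain (fun a b => (a, b) ∈ G.D) → l.toFinset.card = 1 → ∃ y, l = [y] by
    obtain ⟨y, hy⟩ := this π.left π.left_chain h
    simp [source, hy]
  rintro (_ | ⟨a, _ | ⟨b, l⟩⟩) hc hcard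
  · simp at hcard
  · exact ⟨a, rfl⟩
  · obtain ⟨x, hx⟩ := Finset.card_eq_one.1 hcard
    have hmem : ∀ c ∈ a :: b :: l, c = x := fun c hc =>
      Finset.mem_singleton.1 (hx ▸ List.mem_toFinset.2 hc)
    have hab := (List.isChain_cons_cons.1 hc).1
    rw [hmem a (by simp), hmem b (by simp)] at hab
    exact absurd hab (G.D_irrefl x)

lemma head_right_of_isHalfTrek {π : G.Trek} (h : π.IsHalfTrek) :
    π.right.head π.right_ne = π.source ∨ (π.source, π.right.head π.right_ne) ∈ G.B := by
  have hhead : π.left.head π.left_ne = π.source := by simp [left_eq_singleton h]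
  have hc := π.head_cond
  rw [hhead] at hc
  by_cases hb : π.hasBidir
  · exact Or.inr (by simpa [hb] using hc)
  · exact Or.inl (by simp only [hb] at hc; exact hc.symm)

end Trek

/-- The data of the `s`–`t` path `s, L{v,w}, R_v(u₀), …, R_v(uᵣ), t` of `G_flow`, with
`v = child`, `w = source` and `[u₀, …, uᵣ] = right`: a half-trek from `w` to the parent `uᵣ`
of `v`, with a simple right side. -/
structure FlowRoute (G : MixedGraph V) where
  child : V
  source : V
  right : List V
  right_ne : right ≠ []
  valid : validPair G s(child, source)
  head_right : right.head right_ne = source ∨ (source, right.head right_ne) ∈ G.B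
  chain : right.IsChain fun a b => (a, b) ∈ G.D
  getLast_right : (right.getLast right_ne, child) ∈ G.D
  nodup : right.Nodup

lemma isChain_map_R_append_t_iff {v : V} {us : List V} :
    (us.map (FlowNode2.R v) ++ [FlowNode2.t]).IsChain (flowEdge2 G) ↔
      us.IsChain (fun a b => (a, b) ∈ G.D) ∧ ∀ u ∈ us.getLast?, (u, v) ∈ G.D := by
  simp [List.isChain_append, List.isChain_map, flowEdge2]

namespace FlowRoute

def path (r : G.FlowRoute) : List (FlowNode2 V) :=
  (.s :: .L s(r.child, r.source) :: r.right.map (.R r.child)) ++ [.t]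

def edge (r : G.FlowRoute) : V × V := (r.right.getLast r.right_ne, r.child)

def Apart (r r' : G.FlowRoute) : Prop :=
  s(r.child, r.source) ≠ s(r'.child, r'.source) ∧ (r.child = r'.child → r.right.Disjoint r'.right)

def toTrek (r : G.FlowRoute) : G.Trek where
  left := [r.source]
  right := r.right
  left_ne := List.cons_ne_nil _ _
  right_ne := r.right_ne
  hasBidir := decide (r.right.head r.right_ne ≠ r.source)
  left_chain := List.isChain_singleton _
  right_chain := r.chain
  head_cond := by
    by_cases h : r.right.head r.right_ne = r.source
    · simp [h]
    · simpa [h] using r.head_right.resolve_left h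

@[simp] lemma toTrek_source (r : G.FlowRoute) : r.toTrek.source = r.source := rfl

@[simp] lemma toTrek_target (r : G.FlowRoute) : r.toTrek.target = r.edge.1 := rfl

@[simp] lemma toTrek_leftSet (r : G.FlowRoute) : r.toTrek.leftSet = {r.source} := rfl

@[simp] lemma toTrek_rightSet (r : G.FlowRoute) : r.toTrek.rightSet = r.right.toFinset := rfl

lemma toTrek_isHalfTrek (r : G.FlowRoute) : r.toTrek.IsHalfTrek := by
  simp [Trek.IsHalfTrek]

lemma source_ne_child (r : G.FlowRoute) : r.source ≠ r.child :=
  (validPair_mk_iff.1 r.valid).1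

lemma edge_mem (r : G.FlowRoute) : r.edge ∈ G.D := r.getLast_right

lemma Apart.edge_ne {r r' : G.FlowRoute} (h : r.Apart r') : r.edge ≠ r'.edge := by
  intro he
  simp only [edge, Prod.mk.injEq] at he
  exact h.2 he.2 (List.getLast_mem r.right_ne) (he.1 ▸ List.getLast_mem r'.right_ne)

lemma isChain_path (r : G.FlowRoute) : r.path.IsChain (flowEdge2 G) := by
  have hrest := isChain_map_R_append_t_iff.2
    ⟨r.chain, by simpa [List.getLast?_eq_some_getLast r.right_ne] using r.getLast_right⟩
  obtain ⟨u, us, hu⟩ := List.exists_cons_of_ne_nil r.right_ne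
  have hhead := r.head_right
  simp only [hu, List.head_cons] at hhead
  rw [hu] at hrest
  simp only [path, hu, List.map_cons, List.cons_append, List.isChain_cons_cons] at hrest ⊢
  exact ⟨r.valid, ⟨r.valid, r.source, rfl, hhead⟩, hrest⟩

lemma nodup_path (r : G.FlowRoute) : r.path.Nodup := by
  have := r.nodup.map (f := FlowNode2.R r.child) (fun _ _ h => (FlowNode2.R.inj h).2)
  simp [path, List.nodup_append, this]

lemma getLast?_path (r : G.FlowRoute) : r.path.getLast? = some .t := by
  rw [path, List.getLast?_concat]

lemma path_interior (r : G.FlowRoute) :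
    (r.path.drop 1).dropLast = .L s(r.child, r.source) :: r.right.map (.R r.child) := by
  rw [path, List.cons_append, List.drop_one, List.tail_cons, List.dropLast_concat]

lemma apart_iff (r r' : G.FlowRoute) :
    r.Apart r' ↔ ∀ x ∈ (r.path.drop 1).dropLast, x ∉ (r'.path.drop 1).dropLast := by
  rw [path_interior, path_interior]
  simp only [Apart, List.Disjoint, ne_eq, Sym2.eq_iff, List.mem_cons, List.mem_map]
  grind

end FlowRoute

lemma exists_eq_map_R_append_t :
    ∀ {P : List (FlowNode2 V)} {v u : V}, (FlowNode2.R v u :: P).IsChain (flowEdge2 G) →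
      (FlowNode2.R v u :: P).getLast? = some .t → ∃ us : List V, P = us.map (.R v) ++ [FlowNode2.t]
  | [], _, _, _, hl => by simp at hl
  | .t :: P, _, _, hc, _ => ⟨[], by
      obtain _ | ⟨x, P⟩ := P
      · rfl
      · cases x <;> simp [flowEdge2] at hc⟩
  | .R v' u' :: P, _, _, hc, hl => by
      obtain ⟨⟨rfl, -⟩, hc⟩ := List.isChain_cons_cons.1 hc
      obtain ⟨us, rfl⟩ := exists_eq_map_R_append_t hc (by simpa using hl)
      exact ⟨u' :: us, rfl⟩
  | .s :: _, _, _, hc, _ | .L _ :: _, _, _, hc, _ => by simp [flowEdge2] at hc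

lemma exists_flowRoute_eq_path {P : List (FlowNode2 V)} (hc : P.IsChain (flowEdge2 G))
    (hs : P.head? = some .s) (ht : P.getLast? = some .t) (hnd : P.Nodup) :
    ∃ r : G.FlowRoute, P = r.path := by
  obtain ⟨P, rfl⟩ : ∃ P', P = .s :: P' := ⟨P.tail, by cases P <;> simp_all⟩
  obtain _ | ⟨x, _ | ⟨y, P⟩⟩ := P
  · simp at ht
  · cases x <;> simp [flowEdge2] at ht hc
  rw [List.isChain_cons_cons, List.isChain_cons_cons] at hc
  obtain ⟨hsx, hxy, hc⟩ := hc
  obtain ⟨e, rfl⟩ : ∃ e, x = .L e := by cases x <;> simp_all [flowEdge2]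
  obtain ⟨v, u, rfl⟩ : ∃ v u, y = .R v u := by cases y <;> simp_all [flowEdge2]
  obtain ⟨-, w, rfl, hhead⟩ := hxy
  obtain ⟨us, rfl⟩ := exists_eq_map_R_append_t hc (by simpa using ht)
  obtain ⟨hchain, hlast⟩ := (isChain_map_R_append_t_iff (us := u :: us)).1 hc
  have hnodup : ((u :: us).map (FlowNode2.R v)).Nodup :=
    List.Nodup.sublist ((((List.sublist_append_left _ _).cons_cons _).cons _).cons _) hnd
  exact ⟨⟨v, w, u :: us, List.cons_ne_nil _ _, hsx, hhead, hchain,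
    hlast _ (List.getLast?_eq_some_getLast _), hnodup.of_map _⟩, rfl⟩

lemma hasDisjointPaths_iff_exists_flowRoutes {k : ℕ} :
    HasDisjointPaths (flowEdge2 G) .s .t k ↔
      ∃ r : Fin k → G.FlowRoute, Pairwise fun i j => (r i).Apart (r j) := by
  constructor
  · rintro ⟨P, hP, hdisj⟩
    choose r hr using fun i =>
      exists_flowRoute_eq_path (hP i).1 (hP i).2.1 (hP i).2.2.1 (hP i).2.2.2.2
    refine ⟨r, fun i j hij => (FlowRoute.apart_iff _ _).2 ?_⟩
    simpa only [hr] using hdisj i j hij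
  · rintro ⟨r, hr⟩
    refine ⟨fun i => (r i).path, fun i => ⟨(r i).isChain_path, rfl, (r i).getLast?_path, ?_,
      (r i).nodup_path⟩, fun i j hij => (FlowRoute.apart_iff _ _).1 (hr hij)⟩
    simp [FlowRoute.path]


lemma exists_extend_toTrek {ι : Type*} {s : Finset ι} {r : ι → G.FlowRoute}
    (hsrc : Set.InjOn (fun i => (r i).source) s) (v : V) :
    ∃ f : V → G.Trek, ∀ i ∈ s, f (r i).source = (r i).toTrek := by
  refine ⟨fun z => if h : ∃ i ∈ s, (r i).source = z then (r h.choose).toTrek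
    else ⟨[v], [v], List.cons_ne_nil _ _, List.cons_ne_nil _ _, false, List.isChain_singleton _,
      List.isChain_singleton _, by simp⟩, fun i hi => ?_⟩
  have h : ∃ j ∈ s, (r j).source = (r i).source := ⟨i, hi, rfl⟩
  simp only [dif_pos h, hsrc h.choose_spec.1 hi h.choose_spec.2]

lemma satisfiesHTC_of_flowRoutes {ι : Type*} {s : Finset ι} {r : ι → G.FlowRoute} {v : V}
    (hchild : ∀ i ∈ s, (r i).child = v) (hr : ∀ i ∈ s, ∀ j ∈ s, i ≠ j → (r i).Apart (r j))
    (hpa : s.image (fun i => (r i).edge.1) = G.pa v) :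
    G.SatisfiesHTC v (s.image fun i => (r i).source) := by
  have hsrc : Set.InjOn (fun i => (r i).source) s := fun i hi j hj h => by
    by_contra hij
    exact (hr i hi j hj hij).1 (by simp only at h; rw [hchild i hi, hchild j hj, h])
  have htgt : Set.InjOn (fun i => (r i).edge.1) s := fun i hi j hj h => by
    by_contra hij
    exact (hr i hi j hj hij).edge_ne (Prod.ext h ((hchild i hi).trans (hchild j hj).symm))
  obtain ⟨f, hf⟩ := exists_extend_toTrek hsrc v
  refine ⟨?_, ?_, f, ?_, ⟨?_, ?_, ?_⟩, ?_⟩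
  · rw [← hpa, Finset.card_image_of_injOn hsrc, Finset.card_image_of_injOn htgt]
  · simpa only [Finset.forall_mem_image] using
      fun i hi => validPair_mk_iff.1 (hchild i hi ▸ (r i).valid)
  · simp only [Finset.forall_mem_image]
    intro i hi
    rw [hf i hi]
    exact (r i).toTrek_isHalfTrek
  · simp only [Finset.forall_mem_image]
    intro i hi
    rw [hf i hi, FlowRoute.toTrek_source]
  · rw [Finset.image_image, ← hpa]
    exact Finset.image_congr fun i hi => by simp [hf i hi]
  · simp only [Finset.forall_mem_image]
    intro i hi j hj hne
    rw [hf i hi, hf j hj]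
    exact fun h => hne (congrArg (fun i => (r i).source) (htgt hi hj h))
  · simp only [NoSidedIntersection, Finset.forall_mem_image]
    intro i hi j hj hne
    have hij : i ≠ j := by rintro rfl; exact hne rfl
    rw [hf i hi, hf j hj, FlowRoute.toTrek_leftSet, FlowRoute.toTrek_leftSet,
      FlowRoute.toTrek_rightSet, FlowRoute.toTrek_rightSet, Finset.disjoint_singleton,
      List.disjoint_toFinset_iff_disjoint]
    exact ⟨hne, (hr i hi j hj hij).2 ((hchild i hi).trans (hchild j hj).symm)⟩

lemma exists_htc_family_of_flowRoutes {ι : Type*} [Fintype ι] (r : ι → G.FlowRoute)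
    (hr : Pairwise fun i j => (r i).Apart (r j)) (hcard : G.D.card ≤ Fintype.card ι) :
    ∃ Y : V → Finset V, (∀ v, G.SatisfiesHTC v (Y v)) ∧ ∀ v w, v ∈ Y w → w ∉ Y v := by
  have hedge : Function.Injective fun i => (r i).edge := fun i j h => by
    by_contra hij
    exact (hr hij).edge_ne h
  have himage : Finset.univ.image (fun i => (r i).edge) = G.D :=
    Finset.eq_of_subset_of_card_le (by simp [Finset.subset_iff, FlowRoute.edge_mem])
      (by rwa [Finset.card_image_of_injective _ hedge, Finset.card_univ])
  refine ⟨fun v => (Finset.univ.filter fun i => (r i).child = v).image fun i => (r i).source,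
    fun v => ?_, ?_⟩
  · refine satisfiesHTC_of_flowRoutes (by simp) (fun i _ j _ hij => hr hij) ?_
    ext p
    simp only [Finset.mem_image, Finset.mem_filter, Finset.mem_univ, true_and, mem_pa]
    constructor
    · rintro ⟨i, rfl, rfl⟩
      exact (r i).edge_mem
    · intro hp
      obtain ⟨i, -, hi⟩ := Finset.mem_image.1 (himage ▸ hp)
      exact ⟨i, congrArg Prod.snd hi, congrArg Prod.fst hi⟩
  · intro v w hv hw
    simp only [Finset.mem_image, Finset.mem_filter, Finset.mem_univ, true_and] at hv hw
    obtain ⟨i, hci, hsi⟩ := hv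
    obtain ⟨j, hcj, hsj⟩ := hw
    by_cases hij : i = j
    · subst hij
      exact (r i).source_ne_child (hsi.trans hcj.symm)
    · exact (hr hij).1 (by rw [hci, hsi, hcj, hsj, Sym2.eq_swap])

lemma Trek.exists_flowRoute {π : G.Trek} (hπ : π.IsHalfTrek) {v : V} (hv : (π.target, v) ∈ G.D)
    (hvalid : validPair G s(v, π.source)) :
    ∃ r : G.FlowRoute, r.child = v ∧ r.source = π.source ∧ r.right ⊆ π.right := by
  obtain ⟨us, hchain, hnd, hhead, hlast, hsub⟩ :=
    List.IsChain.exists_nodup_subset (l := π.right) π.right_chain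
  have hus : us ≠ [] := by
    rintro rfl
    simp [List.head?_eq_some_head π.right_ne] at hhead
  have hhead' : us.head hus = π.right.head π.right_ne :=
    Option.some.inj (by rw [← List.head?_eq_some_head, ← List.head?_eq_some_head, hhead])
  have hlast' : us.getLast hus = π.target :=
    Option.some.inj (by
      rw [← List.getLast?_eq_some_getLast, hlast, List.getLast?_eq_some_getLast]; rfl)
  exact ⟨⟨v, π.source, us, hus, hvalid, hhead' ▸ Trek.head_right_of_isHalfTrek hπ, hchain,
    hlast' ▸ hv, hnd⟩, rfl, rfl, hsub⟩

lemma SatisfiesHTC.exists_halfTreks {v : V} {Y : Finset V} (h : G.SatisfiesHTC v Y) :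
    ∃ (y : V → V) (π : V → G.Trek), ∀ p ∈ G.pa v, y p ∈ Y ∧ (π p).IsHalfTrek ∧
      (π p).source = y p ∧ (π p).target = p ∧
      ∀ p' ∈ G.pa v, p ≠ p' → y p ≠ y p' ∧ Disjoint (π p).rightSet (π p').rightSet := by
  obtain ⟨-, -, f, hhalf, ⟨hsrc, himg, -⟩, hnsi⟩ := h
  have hex : ∀ p ∈ G.pa v, ∃ y ∈ Y, (f y).target = p := fun p hp => by
    rw [← himg] at hp
    simpa using hp
  choose! y hyY hyp using hex
  refine ⟨y, fun p => f (y p), fun p hp => ⟨hyY p hp, hhalf _ (hyY p hp), hsrc _ (hyY p hp),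
    hyp p hp, fun p' hp' hne => ?_⟩⟩
  have hy : y p ≠ y p' := fun h => hne (by rw [← hyp p hp, ← hyp p' hp', h])
  exact ⟨hy, (hnsi _ (hyY p hp) _ (hyY p' hp') hy).2⟩

lemma exists_flowRoutes_of_htc {Y : V → Finset V} (hY : ∀ v, G.SatisfiesHTC v (Y v))
    (hmut : ∀ v w, v ∈ Y w → w ∉ Y v) :
    ∃ r : G.D → G.FlowRoute, Pairwise fun d d' => (r d).Apart (r d') := by
  choose y π hπ using fun v => (hY v).exists_halfTreks
  have hroute : ∀ d : G.D, ∃ r : G.FlowRoute, r.child = d.1.2 ∧ r.source = y d.1.2 d.1.1 ∧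
      r.right ⊆ (π d.1.2 d.1.1).right := by
    rintro ⟨⟨p, v⟩, hd⟩
    obtain ⟨hyY, hhalf, hsrc, htgt, -⟩ := hπ v p (mem_pa.2 hd)
    show ∃ r : G.FlowRoute, r.child = v ∧ r.source = y v p ∧ r.right ⊆ (π v p).right
    rw [← hsrc]
    refine Trek.exists_flowRoute hhalf (by rwa [htgt]) ?_
    rw [hsrc, validPair_mk_iff]
    exact (hY v).2.1 _ hyY
  choose r hchild hsource hsub using hroute
  refine ⟨r, ?_⟩
  rintro ⟨⟨p, v⟩, hd⟩ ⟨⟨p', v'⟩, hd'⟩ hne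
  obtain ⟨hyY, -, -, -, hsep⟩ := hπ v p (mem_pa.2 hd)
  obtain ⟨hyY', -⟩ := hπ v' p' (mem_pa.2 hd')
  refine ⟨?_, fun hvv => ?_⟩
  · rw [hchild, hsource, hchild, hsource, Ne, Sym2.eq_iff]
    dsimp only
    rintro (⟨rfl, hyy⟩ | ⟨hv, hv'⟩)
    · exact (hsep p' (mem_pa.2 hd') (fun hpp => hne (by subst hpp; rfl))).1 hyy
    · exact hmut v v' (hv ▸ hyY') (hv' ▸ hyY)
  · rw [hchild, hchild] at hvv
    dsimp only at hvv
    subst hvv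
    have hpp : p ≠ p' := fun hpp => hne (by subst hpp; rfl)
    exact List.disjoint_of_subset_left (hsub _) (List.disjoint_of_subset_right (hsub _)
      (List.disjoint_toFinset_iff_disjoint.1 (hsep p' (mem_pa.2 hd') hpp).2))

end MixedGraph

/-- A mixed graph `G` is HTC-infinite-to-one if and only if the maximum number of directed
`s`–`t` paths in `G_flow` that are pairwise vertex-disjoint except at `s` and `t` is
strictly less than `|D| = Σ_{v ∈ V} |pa(v)|`. -/
theorem htc_infinite_to_one_maxflow {V : Type*} [Fintype V] [DecidableEq V]
    (G : MixedGraph V) :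
    G.HTCInfiniteToOne ↔
      ∀ k, HasDisjointPaths (flowEdge2 G) FlowNode2.s FlowNode2.t k → k < G.D.card := by
  simp only [MixedGraph.hasDisjointPaths_iff_exists_flowRoutes]
  constructor
  · rintro hinf k ⟨r, hr⟩
    by_contra! hk
    obtain ⟨Y, hY, hmut⟩ := MixedGraph.exists_htc_family_of_flowRoutes r hr (by simpa using hk)
    obtain ⟨v, hv⟩ | ⟨v, w, hvw, hwv⟩ := hinf Y
    exacts [hv (hY v), hmut v w hvw hwv]
  · intro hflow Y
    by_contra! h
    obtain ⟨r, hr⟩ := MixedGraph.exists_flowRoutes_of_htc h.1 h.2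
    exact lt_irrefl _
      (hflow _ ⟨r ∘ G.D.equivFin.symm, hr.comp_of_injective G.D.equivFin.symm.injective⟩)
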